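/- arXiv:2601.01152 — 2 statements merged into one kernel-verified Lean document; each statement's English description precedes it below -/
import Mathlib

section
/- Let a, b be unit vectors in ℂ^n, T Hermitian positive semidefinite with g(v) = v^H T v, and α = ⟨a,b⟩. Then |g(b) − g(a)| ≤ 2‖T‖(1 − |α|²) + 2‖T‖|α|√(1 − |α|²); in particular if |α| = 1 then g(b) = g(a). -/
open scoped Matrix.Norms.L2Operator ComplexOrder
open Matrix

/-- Hermitian inner product `a^H b` on `ℂ^n`. -/
noncomputable def conjDot {n : ℕ} (a b : Fin n → ℂ) : ℂ :=
  ∑ i, (starRingEnd ℂ) (a i) * b i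

/-- Euclidean (ℓ²) norm on `ℂ^n`. -/
noncomputable def l2norm {n : ℕ} (a : Fin n → ℂ) : ℝ :=
  Real.sqrt (∑ i, ‖a i‖ ^ 2)

/-- Rank-one outer product `v v^H`, with entries `v i * conj (v j)`. -/
noncomputable def outer {n : ℕ} (v : Fin n → ℂ) : Matrix (Fin n) (Fin n) ℂ :=
  fun i j => v i * (starRingEnd ℂ) (v j)

/-- Frobenius norm of a matrix. -/
noncomputable def frob {n : ℕ} (M : Matrix (Fin n) (Fin n) ℂ) : ℝ :=
  Real.sqrt (∑ i, ∑ j, ‖M i j‖ ^ 2)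

private noncomputable def eucl {n : ℕ} (v : Fin n → ℂ) : EuclideanSpace ℂ (Fin n) :=
  (WithLp.equiv 2 (Fin n → ℂ)).symm v

private lemma conjDot_eq_inner {n : ℕ} (x y : Fin n → ℂ) :
    conjDot x y = inner (𝕜 := ℂ) (eucl x) (eucl y) := by
  simp [conjDot, eucl, PiLp.inner_apply, RCLike.inner_apply]
  exact Finset.sum_congr rfl (fun i _ => mul_comm _ _)

private lemma l2norm_eq {n : ℕ} (x : Fin n → ℂ) : l2norm x = ‖eucl x‖ := by
  simp [l2norm, eucl, EuclideanSpace.norm_eq]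

set_option maxHeartbeats 1000000 in
theorem stmt5 {n : ℕ} (a b : Fin n → ℂ) (ha : l2norm a = 1) (hb : l2norm b = 1)
    (T : Matrix (Fin n) (Fin n) ℂ) (hT : T.PosSemidef) :
    |(conjDot b (T.mulVec b)).re - (conjDot a (T.mulVec a)).re| ≤
        2 * ‖T‖ * (1 - ‖conjDot a b‖ ^ 2) +
          2 * ‖T‖ * ‖conjDot a b‖ * Real.sqrt (1 - ‖conjDot a b‖ ^ 2) ∧
      (‖conjDot a b‖ = 1 →
        (conjDot b (T.mulVec b)).re = (conjDot a (T.mulVec a)).re) := by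
  set A : EuclideanSpace ℂ (Fin n) := eucl a with hAdef
  set B : EuclideanSpace ℂ (Fin n) := eucl b with hBdef
  set L : EuclideanSpace ℂ (Fin n) →ₗ[ℂ] EuclideanSpace ℂ (Fin n) := Matrix.toEuclideanLin T
    with hLdef
  have hA : ‖A‖ = 1 := by rw [← l2norm_eq]; exact ha
  have hB : ‖B‖ = 1 := by rw [← l2norm_eq]; exact hb
  set α : ℂ := conjDot a b with hαdef
  have hAB : inner (𝕜 := ℂ) A B = α := (conjDot_eq_inner a b).symm
  have hga : conjDot a (T.mulVec a) = inner (𝕜 := ℂ) A (L A) := conjDot_eq_inner a _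
  have hgb : conjDot b (T.mulVec b) = inner (𝕜 := ℂ) B (L B) := conjDot_eq_inner b _
  have hαle : ‖α‖ ≤ 1 := by
    rw [← hAB]
    simpa [hA, hB] using norm_inner_le_norm (𝕜 := ℂ) A B
  have hLnorm : ∀ x : EuclideanSpace ℂ (Fin n), ‖L x‖ ≤ ‖T‖ * ‖x‖ := fun x =>
    T.l2_opNorm_mulVec x
  have hTnn : (0:ℝ) ≤ ‖T‖ := norm_nonneg T
  have hbound : ∀ x y : EuclideanSpace ℂ (Fin n),
      ‖inner (𝕜 := ℂ) x (L y)‖ ≤ ‖x‖ * (‖T‖ * ‖y‖) := by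
    intro x y
    refine (norm_inner_le_norm x (L y)).trans ?_
    have := hLnorm y
    have h0 : (0:ℝ) ≤ ‖x‖ := norm_nonneg _
    nlinarith [norm_nonneg (L y)]
  set C : EuclideanSpace ℂ (Fin n) := B - α • A with hCdef
  have hBAC : B = α • A + C := by rw [hCdef]; abel
  have hC2 : ‖C‖ ^ 2 = 1 - ‖α‖ ^ 2 := by
    have h1 : inner (𝕜 := ℂ) B (α • A) = ((‖α‖ ^ 2 : ℝ) : ℂ) := by
      rw [inner_smul_right, ← inner_conj_symm, hAB, Complex.mul_conj']
      push_cast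
      ring
    rw [hCdef, @norm_sub_sq ℂ, h1, hB]
    rw [norm_smul, hA]
    simp only [RCLike.re_to_complex, Complex.ofReal_re, mul_one, one_pow]
    ring
  have hCnn : (0:ℝ) ≤ 1 - ‖α‖ ^ 2 := by rw [← hC2]; positivity
  have hCnorm : ‖C‖ = Real.sqrt (1 - ‖α‖ ^ 2) := by
    rw [← hC2, Real.sqrt_sq (norm_nonneg _)]
  -- expansion
  have hLB : L B = α • L A + L C := by rw [hBAC]; simp
  have hcc : ((‖α‖ ^ 2 : ℝ) : ℂ) = (starRingEnd ℂ) α * α := by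
    push_cast
    rw [← Complex.mul_conj']
    ring
  have hexp : inner (𝕜 := ℂ) B (L B) =
      ((‖α‖ ^ 2 : ℝ) : ℂ) * inner (𝕜 := ℂ) A (L A) +
        ((starRingEnd ℂ) α * inner (𝕜 := ℂ) A (L C) + α * inner (𝕜 := ℂ) C (L A)
          + inner (𝕜 := ℂ) C (L C)) := by
    rw [hLB]
    nth_rewrite 1 [hBAC]
    simp only [inner_add_left, inner_add_right, inner_smul_left, inner_smul_right]
    rw [hcc]
    ring
  have hdiff : (conjDot b (T.mulVec b)).re - (conjDot a (T.mulVec a)).re =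
      (‖α‖ ^ 2 - 1) * (inner (𝕜 := ℂ) A (L A)).re +
        (((starRingEnd ℂ) α * inner (𝕜 := ℂ) A (L C)).re
          + (α * inner (𝕜 := ℂ) C (L A)).re + (inner (𝕜 := ℂ) C (L C)).re) := by
    rw [hga, hgb, hexp]
    simp only [Complex.add_re, Complex.re_ofReal_mul]
    ring
  have e1 : |(inner (𝕜 := ℂ) A (L A)).re| ≤ ‖T‖ := by
    refine (Complex.abs_re_le_norm _).trans ?_
    simpa [hA] using hbound A A
  have e2 : |((starRingEnd ℂ) α * inner (𝕜 := ℂ) A (L C)).re| ≤ ‖α‖ * (‖T‖ * ‖C‖) := by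
    refine (Complex.abs_re_le_norm _).trans ?_
    rw [norm_mul, RCLike.norm_conj]
    have := hbound A C
    rw [hA] at this
    calc ‖α‖ * ‖inner (𝕜 := ℂ) A (L C)‖ ≤ ‖α‖ * (1 * (‖T‖ * ‖C‖)) := by
          exact mul_le_mul_of_nonneg_left this (norm_nonneg α)
      _ = ‖α‖ * (‖T‖ * ‖C‖) := by ring
  have e3 : |(α * inner (𝕜 := ℂ) C (L A)).re| ≤ ‖α‖ * (‖T‖ * ‖C‖) := by
    refine (Complex.abs_re_le_norm _).trans ?_
    rw [norm_mul]
    have := hbound C A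
    rw [hA] at this
    calc ‖α‖ * ‖inner (𝕜 := ℂ) C (L A)‖ ≤ ‖α‖ * (‖C‖ * (‖T‖ * 1)) := by
          exact mul_le_mul_of_nonneg_left this (norm_nonneg α)
      _ = ‖α‖ * (‖T‖ * ‖C‖) := by ring
  have e4 : |(inner (𝕜 := ℂ) C (L C)).re| ≤ ‖T‖ * (1 - ‖α‖ ^ 2) := by
    refine (Complex.abs_re_le_norm _).trans ?_
    refine (hbound C C).trans ?_
    have : ‖C‖ * (‖T‖ * ‖C‖) = ‖T‖ * ‖C‖ ^ 2 := by ring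
    rw [this, hC2]
  have main : |(conjDot b (T.mulVec b)).re - (conjDot a (T.mulVec a)).re| ≤
      2 * ‖T‖ * (1 - ‖α‖ ^ 2) + 2 * ‖T‖ * ‖α‖ * Real.sqrt (1 - ‖α‖ ^ 2) := by
    rw [hdiff, ← hCnorm]
    set r1 : ℝ := (inner (𝕜 := ℂ) A (L A)).re with hr1
    set r2 : ℝ := (((starRingEnd ℂ) α) * inner (𝕜 := ℂ) A (L C)).re with hr2
    set r3 : ℝ := (α * inner (𝕜 := ℂ) C (L A)).re with hr3
    set r4 : ℝ := (inner (𝕜 := ℂ) C (L C)).re with hr4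
    have h5 : |(‖α‖ ^ 2 - 1) * r1| ≤ (1 - ‖α‖ ^ 2) * ‖T‖ := by
      rw [abs_mul, abs_of_nonpos (by nlinarith : ‖α‖ ^ 2 - 1 ≤ 0)]
      have hh : -(‖α‖ ^ 2 - 1) = 1 - ‖α‖ ^ 2 := by ring
      rw [hh]
      exact mul_le_mul_of_nonneg_left e1 hCnn
    have h6 : |(‖α‖ ^ 2 - 1) * r1 + (r2 + r3 + r4)| ≤
        |(‖α‖ ^ 2 - 1) * r1| + (|r2| + |r3| + |r4|) := by
      refine (abs_add_le _ _).trans ?_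
      gcongr
      refine (abs_add_le _ _).trans ?_
      gcongr
      exact abs_add_le _ _
    have h7 : (1 - ‖α‖ ^ 2) * ‖T‖ + (‖α‖ * (‖T‖ * ‖C‖) + ‖α‖ * (‖T‖ * ‖C‖)
        + ‖T‖ * (1 - ‖α‖ ^ 2)) = 2 * ‖T‖ * (1 - ‖α‖ ^ 2) + 2 * ‖T‖ * ‖α‖ * ‖C‖ := by ring
    linarith [e2, e3, e4]
  refine ⟨main, fun hα1 => ?_⟩
  have h0 : 2 * ‖T‖ * (1 - ‖α‖ ^ 2) + 2 * ‖T‖ * ‖α‖ * Real.sqrt (1 - ‖α‖ ^ 2) = 0 := by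
    rw [hα1]
    simp
  have := main
  rw [h0] at this
  have h2 := abs_nonneg ((conjDot b (T.mulVec b)).re - (conjDot a (T.mulVec a)).re)
  have h3 : |(conjDot b (T.mulVec b)).re - (conjDot a (T.mulVec a)).re| = 0 := le_antisymm this h2
  linarith [abs_eq_zero.mp h3]
end

section
/- For unit vectors a, b in ℂ^n, the operator norm of a a^H − b b^H equals √(1 − |⟨a,b⟩|²). -/
open scoped Matrix.Norms.L2Operator ComplexOrder
open Matrix

/-- general rank-one matrix -/
noncomputable def rank1 {n : ℕ} (x y : Fin n → ℂ) : Matrix (Fin n) (Fin n) ℂ :=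
  fun i j => x i * (starRingEnd ℂ) (y j)

lemma rank1_mul {n : ℕ} (x y u v : Fin n → ℂ) :
    rank1 x y * rank1 u v = conjDot y u • rank1 x v := by
  ext i j
  simp only [Matrix.mul_apply, Matrix.smul_apply, smul_eq_mul, rank1, conjDot, Finset.sum_mul]
  exact Finset.sum_congr rfl fun k _ => by ring

lemma sum_normsq {n : ℕ} {v : Fin n → ℂ} (hv : l2norm v = 1) : ∑ i, ‖v i‖ ^ 2 = (1 : ℝ) := by
  have h0 : 0 ≤ ∑ i, ‖v i‖ ^ 2 := Finset.sum_nonneg fun i _ => sq_nonneg _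
  have h := Real.sq_sqrt h0
  unfold l2norm at hv
  rw [hv] at h
  simpa using h.symm

lemma conjDot_self {n : ℕ} {v : Fin n → ℂ} (hv : l2norm v = 1) : conjDot v v = 1 := by
  have h := sum_normsq hv
  unfold conjDot
  have h2 : ∀ i, (starRingEnd ℂ) (v i) * v i = ((‖v i‖ ^ 2 : ℝ) : ℂ) := fun i => by
    rw [Complex.conj_mul']
    norm_cast
  rw [Finset.sum_congr rfl fun i _ => h2 i, ← Complex.ofReal_sum, h, Complex.ofReal_one]

lemma conjDot_comm {n : ℕ} (x y : Fin n → ℂ) :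
    conjDot y x = (starRingEnd ℂ) (conjDot x y) := by
  unfold conjDot
  rw [map_sum]
  exact Finset.sum_congr rfl fun i _ => by
    simp [mul_comm]

theorem stmt16 {n : ℕ} (a b : Fin n → ℂ) (ha : l2norm a = 1) (hb : l2norm b = 1) :
    ‖outer a - outer b‖ = Real.sqrt (1 - ‖conjDot a b‖ ^ 2) := by
  set c := conjDot a b with hc
  set M : Matrix (Fin n) (Fin n) ℂ := outer a - outer b with hM
  have houter : ∀ v : Fin n → ℂ, outer v = rank1 v v := fun v => rfl
  have hAA : outer a * outer a = outer a := by
    rw [houter, rank1_mul, conjDot_self ha, one_smul]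
  have hBB : outer b * outer b = outer b := by
    rw [houter, rank1_mul, conjDot_self hb, one_smul]
  have hAB : outer a * outer b = c • rank1 a b := by
    rw [houter a, houter b, rank1_mul, hc]
  have hBA : outer b * outer a = (starRingEnd ℂ) c • rank1 b a := by
    rw [houter a, houter b, rank1_mul, conjDot_comm, hc]
  have hCA : rank1 a b * outer a = (starRingEnd ℂ) c • outer a := by
    rw [houter, rank1_mul, conjDot_comm, hc]
  have hCB : rank1 a b * outer b = rank1 a b := by
    rw [houter, rank1_mul, conjDot_self hb, one_smul]
  have hDA : rank1 b a * outer a = rank1 b a := by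
    rw [houter, rank1_mul, conjDot_self ha, one_smul]
  have hDB : rank1 b a * outer b = c • outer b := by
    rw [houter, rank1_mul, hc]
  -- key identity: M³ = (1 - |c|²) M
  have key : M * M * M = M - (c * (starRingEnd ℂ) c) • M := by
    rw [hM]
    simp only [sub_mul, mul_sub, add_mul, smul_mul_assoc, hAA, hBB, hAB, hBA, hCA, hCB,
      hDA, hDB, smul_smul, smul_sub]
    module
  have hcs : ‖c‖ ≤ 1 := by
    set a' : EuclideanSpace ℂ (Fin n) := (WithLp.equiv 2 (Fin n → ℂ)).symm a with ha'
    set b' : EuclideanSpace ℂ (Fin n) := (WithLp.equiv 2 (Fin n → ℂ)).symm b with hb'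
    have h := norm_inner_le_norm (𝕜 := ℂ) a' b'
    rw [PiLp.inner_apply] at h
    simp only [RCLike.inner_apply] at h
    have hna : ‖a'‖ = 1 := by
      rw [EuclideanSpace.norm_eq]; exact ha
    have hnb : ‖b'‖ = 1 := by
      rw [EuclideanSpace.norm_eq]; exact hb
    rw [hna, hnb, mul_one] at h
    convert h using 2
    · rfl
    · rw [hc]; unfold conjDot
      exact Finset.sum_congr rfl fun i _ => by simp [ha', hb', mul_comm]
  set s : ℝ := 1 - ‖c‖ ^ 2 with hs
  have hs0 : 0 ≤ s := by
    have : ‖c‖ ^ 2 ≤ 1 := by nlinarith [norm_nonneg c]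
    linarith
  have hcc : c * (starRingEnd ℂ) c = ((‖c‖ ^ 2 : ℝ) : ℂ) := by
    rw [Complex.mul_conj, Complex.normSq_eq_norm_sq]
    try push_cast
    try ring
  have key2 : M * M * M = (s : ℂ) • M := by
    rw [key, hcc, hs]
    push_cast
    module
  have hH : Mᴴ = M := by
    rw [hM]
    ext i j
    simp only [Matrix.conjTranspose_apply, Matrix.sub_apply, outer, star_sub, star_mul']
    simp [mul_comm]
  have h1 : ‖M * M‖ = ‖M‖ * ‖M‖ := by
    have := Matrix.l2_opNorm_conjTranspose_mul_self M
    rwa [hH] at this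
  have h2 : ‖(M * M) * (M * M)‖ = ‖M * M‖ * ‖M * M‖ := by
    have := Matrix.l2_opNorm_conjTranspose_mul_self (M * M)
    rwa [Matrix.conjTranspose_mul, hH] at this
  have h3 : (M * M) * (M * M) = (s : ℂ) • (M * M) := by
    calc (M * M) * (M * M) = (M * M * M) * M := (mul_assoc (M * M) M M).symm
      _ = ((s : ℂ) • M) * M := by rw [key2]
      _ = (s : ℂ) • (M * M) := by rw [smul_mul_assoc]
  have h4 : ‖M‖ * ‖M‖ * (‖M‖ * ‖M‖) = s * (‖M‖ * ‖M‖) := by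
    have := h2
    rw [h3, norm_smul] at this
    rw [← h1, ← this, h1]
    simp [abs_of_nonneg hs0, Complex.norm_real]
    try ring
  by_cases hM0 : ‖M‖ = 0
  · -- degenerate case: M = 0, then |c| = 1 and s = 0
    have hMz : M = 0 := norm_eq_zero.mp hM0
    have hABeq : outer a = outer b := sub_eq_zero.mp hMz
    have hbi : ∀ i, b i = c * a i := by
      intro i
      have he : ∑ j, outer a i j * b j = ∑ j, outer b i j * b j := by rw [hABeq]
      have hL : ∑ j, outer a i j * b j = a i * c := by
        rw [hc]
        unfold outer conjDot
        rw [Finset.mul_sum]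
        exact Finset.sum_congr rfl fun j _ => by ring
      have hR : ∑ j, outer b i j * b j = b i := by
        have : ∑ j, outer b i j * b j = b i * conjDot b b := by
          unfold outer conjDot
          rw [Finset.mul_sum]
          exact Finset.sum_congr rfl fun j _ => by ring
        rw [this, conjDot_self hb, mul_one]
      rw [hL, hR] at he
      rw [← he]; ring
    have hsum : ∑ i, ‖b i‖ ^ 2 = ‖c‖ ^ 2 * ∑ i, ‖a i‖ ^ 2 := by
      rw [Finset.mul_sum]
      exact Finset.sum_congr rfl fun i _ => by rw [hbi i, norm_mul]; ring
    have h1c : (1 : ℝ) = ‖c‖ ^ 2 := by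
      rw [← sum_normsq hb, hsum, sum_normsq ha, mul_one]
    have hsz : s = 0 := by rw [hs, ← h1c]; ring
    rw [hM0, hsz]
    simp
  · have hne : ‖M‖ * ‖M‖ ≠ 0 := mul_ne_zero hM0 hM0
    have hsq : ‖M‖ * ‖M‖ = s := mul_right_cancel₀ hne h4
    rw [← hsq]
    exact (Real.sqrt_mul_self (norm_nonneg M)).symm
end
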